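/- Sufficiency direction of the KYP lemma in the time domain (Lemma 1, (1) ⟹ (2)). Let A ∈ ℂ^{n×n}, B ∈ ℂ^{n×p}, C ∈ ℂ^{q×n}, D ∈ ℂ^{q×p} be constant matrices, and let P ∈ ℂ^{n×n} and Π ∈ ℂ^{(q+p)×(q+p)} be Hermitian. Suppose the linear matrix inequality [A B; I 0]^* (Θ ⊗ P) [A B; I 0] + [C D; 0 I]^* Π [C D; 0 I] ⪯ 0 holds, where Θ = [[0,1],[1,0]]. Let x : [0,∞) → ℂⁿ be continuously differentiable with x(0) = 0, let u : [0,∞) → ℂ^p be continuous, assume ẋ(t) = A x(t) + B u(t) for all t ≥ 0, and set y(t) = C x(t) + D u(t). If t ↦ [y(t); u(t)]^* Π [y(t); u(t)] is integrable on [0,∞) and lim_{T→∞} x(T)^* P x(T) exists and is nonnegative, then ∫₀^∞ [y(t); u(t)]^* Π [y(t); u(t)] dt ≤ 0. -/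

import Mathlib

open Matrix MeasureTheory
open scoped ComplexOrder Matrix.Norms.L2Operator

/-!
Along a trajectory, the LMI evaluated at `(x(t), u(t))` says that the storage
`V(t) = x(t)^* P x(t)` satisfies `V'(t) + s(t) ≤ 0`, where `s(t) = [y; u]^* Π [y; u]` is the
supply rate. Integrating over `[0, T]` and letting `T → ∞` gives
`∫₀^∞ s ≤ V(0) - lim V = -L ≤ 0`.
-/

/-- `Ψ ⊗ Q`: the Kronecker product of a `2×2` matrix with an `n×n` matrix,
realized as a `2n × 2n` block matrix. -/
noncomputable def kron2 {n : ℕ} (Ψ : Matrix (Fin 2) (Fin 2) ℂ)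
    (Q : Matrix (Fin n) (Fin n) ℂ) : Matrix (Fin n ⊕ Fin n) (Fin n ⊕ Fin n) ℂ :=
  Matrix.fromBlocks (Ψ 0 0 • Q) (Ψ 0 1 • Q) (Ψ 1 0 • Q) (Ψ 1 1 • Q)

/-- The real-valued Hermitian quadratic form `z ↦ z^* H z`. -/
noncomputable def qf {m : Type*} [Fintype m] (H : Matrix m m ℂ) (z : m → ℂ) : ℝ :=
  (dotProduct (star z) (H.mulVec z)).re

section QuadraticForm

variable {m k : Type*} [Fintype m] [Fintype k]

lemma qf_add (M N : Matrix m m ℂ) (z : m → ℂ) : qf (M + N) z = qf M z + qf N z := by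
  simp [qf, Matrix.add_mulVec, dotProduct_add]

lemma qf_conjTranspose_mul_mul (M : Matrix k m ℂ) (K : Matrix k k ℂ) (z : m → ℂ) :
    qf (Mᴴ * K * M) z = qf K (M *ᵥ z) := by
  rw [qf, qf, Matrix.star_mulVec, ← Matrix.dotProduct_mulVec, Matrix.mulVec_mulVec,
    Matrix.mulVec_mulVec, Matrix.mul_assoc]

lemma qf_nonpos_of_posSemidef_neg {M : Matrix m m ℂ} (h : (-M).PosSemidef) (z : m → ℂ) :
    qf M z ≤ 0 := by
  have hz := h.dotProduct_mulVec_nonneg z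
  rw [Matrix.neg_mulVec, dotProduct_neg, neg_nonneg] at hz
  exact (Complex.le_def.mp hz).1

lemma qf_zero (M : Matrix m m ℂ) : qf M 0 = 0 := by
  simp [qf]

lemma hasDerivAt_qf (M : Matrix m m ℂ) {x : ℝ → m → ℂ} {v : m → ℂ} {t : ℝ}
    (hx : HasDerivAt x v t) :
    HasDerivAt (fun s => qf M (x s)) ((star v ⬝ᵥ M *ᵥ x t + star (x t) ⬝ᵥ M *ᵥ v).re) t := by
  have hxi : ∀ i, HasDerivAt (fun s => x s i) (v i) t := hasDerivAt_pi.1 hx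
  have hsum : HasDerivAt (fun s => ∑ i, star (x s i) * ∑ j, M i j * x s j)
      (∑ i, (star (v i) * ∑ j, M i j * x t j + star (x t i) * ∑ j, M i j * v j)) t :=
    HasDerivAt.fun_sum fun i _ =>
      (hxi i).star.fun_mul (HasDerivAt.fun_sum fun j _ => (hxi j).const_mul (M i j))
  have hval : star v ⬝ᵥ M *ᵥ x t + star (x t) ⬝ᵥ M *ᵥ v
      = ∑ i, (star (v i) * ∑ j, M i j * x t j + star (x t i) * ∑ j, M i j * v j) := by
    simp only [dotProduct, Matrix.mulVec, Pi.star_apply, Finset.sum_add_distrib]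
  rw [hval]
  exact Complex.reCLM.hasFDerivAt.comp_hasDerivAt t hsum

end QuadraticForm

lemma qf_kron2_swap {n : ℕ} (P : Matrix (Fin n) (Fin n) ℂ) (a b : Fin n → ℂ) :
    qf (kron2 !![0,1;1,0] P) (Sum.elim a b) = (star a ⬝ᵥ P *ᵥ b + star b ⬝ᵥ P *ᵥ a).re := by
  rw [qf, kron2, Matrix.fromBlocks_mulVec]
  simp [dotProduct, Fintype.sum_sum_type]

lemma storage_deriv_add_supply_nonpos {n : ℕ} {ι κ : Type*} [Fintype ι] [Fintype κ]
    [DecidableEq κ] {A : Matrix (Fin n) (Fin n) ℂ} {B : Matrix (Fin n) κ ℂ}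
    {C : Matrix ι (Fin n) ℂ} {D : Matrix ι κ ℂ} {P : Matrix (Fin n) (Fin n) ℂ}
    {Pi : Matrix (ι ⊕ κ) (ι ⊕ κ) ℂ}
    (hLMI : Matrix.PosSemidef
      (-((Matrix.fromBlocks A B (1 : Matrix (Fin n) (Fin n) ℂ) 0)ᴴ * kron2 !![0,1;1,0] P *
            Matrix.fromBlocks A B (1 : Matrix (Fin n) (Fin n) ℂ) 0 +
          (Matrix.fromBlocks C D 0 (1 : Matrix κ κ ℂ))ᴴ * Pi *
            Matrix.fromBlocks C D 0 (1 : Matrix κ κ ℂ))))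
    (ξ : Fin n → ℂ) (w : κ → ℂ) :
    (star (A *ᵥ ξ + B *ᵥ w) ⬝ᵥ P *ᵥ ξ + star ξ ⬝ᵥ P *ᵥ (A *ᵥ ξ + B *ᵥ w)).re
      + qf Pi (Sum.elim (C *ᵥ ξ + D *ᵥ w) w) ≤ 0 := by
  have h := qf_nonpos_of_posSemidef_neg hLMI (Sum.elim ξ w)
  rw [qf_add, qf_conjTranspose_mul_mul, qf_conjTranspose_mul_mul, Matrix.fromBlocks_mulVec,
    Matrix.fromBlocks_mulVec] at h
  simp only [Sum.elim_comp_inl, Sum.elim_comp_inr, Matrix.one_mulVec, Matrix.zero_mulVec,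
    add_zero, zero_add] at h
  rwa [qf_kron2_swap] at h

lemma sub_le_integral_Ioi_of_hasDerivAt_of_le {V V' φ : ℝ → ℝ} {a L : ℝ}
    (hV : ∀ t ∈ Set.Ici a, HasDerivAt V (V' t) t) (hφ : IntegrableOn φ (Set.Ioi a))
    (hle : ∀ t ∈ Set.Ioi a, V' t ≤ φ t) (hlim : Filter.Tendsto V Filter.atTop (nhds L)) :
    L - V a ≤ ∫ t in Set.Ioi a, φ t := by
  have hfinite : ∀ᶠ T in Filter.atTop, V T - V a ≤ ∫ t in a..T, φ t := by
    filter_upwards [Filter.eventually_ge_atTop a] with T hT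
    refine intervalIntegral.sub_le_integral_of_hasDeriv_right_of_le hT
      (fun t ht => (hV t ht.1).continuousAt.continuousWithinAt)
      (fun t ht => (hV t (Set.mem_Ici.2 ht.1.le)).hasDerivWithinAt)
      ((integrableOn_Icc_iff_integrableOn_Ioc).2 (hφ.mono_set Set.Ioc_subset_Ioi_self))
      (fun t ht => hle t ht.1)
  exact le_of_tendsto_of_tendsto (hlim.sub_const _)
    (intervalIntegral_tendsto_integral_Ioi a hφ Filter.tendsto_id) hfinite

theorem KYP_sufficiency_time_domain_general
    {n p q : ℕ}
    (A : Matrix (Fin n) (Fin n) ℂ) (B : Matrix (Fin n) (Fin p) ℂ)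
    (C : Matrix (Fin q) (Fin n) ℂ) (D : Matrix (Fin q) (Fin p) ℂ)
    (P : Matrix (Fin n) (Fin n) ℂ)
    (Pi : Matrix (Fin q ⊕ Fin p) (Fin q ⊕ Fin p) ℂ)
    -- the KYP linear matrix inequality
    (hLMI : Matrix.PosSemidef
      (-((Matrix.fromBlocks A B (1 : Matrix (Fin n) (Fin n) ℂ) 0)ᴴ * kron2 !![0,1;1,0] P *
            Matrix.fromBlocks A B (1 : Matrix (Fin n) (Fin n) ℂ) 0 +
          (Matrix.fromBlocks C D 0 (1 : Matrix (Fin p) (Fin p) ℂ))ᴴ * Pi * Matrix.fromBlocks C D 0 (1 : Matrix (Fin p) (Fin p) ℂ))))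
    (x : ℝ → Fin n → ℂ) (x' : ℝ → Fin n → ℂ)
    (hx : ∀ t ∈ Set.Ici (0:ℝ), HasDerivAt x (x' t) t)
    (hx0 : x 0 = 0)
    (u : ℝ → Fin p → ℂ)
    (hode : ∀ t ∈ Set.Ici (0:ℝ), x' t = A.mulVec (x t) + B.mulVec (u t))
    (y : ℝ → Fin q → ℂ)
    (hy : ∀ t ∈ Set.Ici (0:ℝ), y t = C.mulVec (x t) + D.mulVec (u t))
    (hPerfInt : IntegrableOn (fun t => qf Pi (Sum.elim (y t) (u t))) (Set.Ioi 0))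
    (hlim : ∃ L : ℝ, 0 ≤ L ∧
      Filter.Tendsto (fun T => qf P (x T)) Filter.atTop (nhds L)) :
    ∫ t in Set.Ioi (0:ℝ), qf Pi (Sum.elim (y t) (u t)) ≤ 0 := by
  obtain ⟨L, hL, hlim⟩ := hlim
  have hdiss : ∀ t ∈ Set.Ioi (0:ℝ),
      (star (x' t) ⬝ᵥ P *ᵥ x t + star (x t) ⬝ᵥ P *ᵥ x' t).re
        ≤ -qf Pi (Sum.elim (y t) (u t)) := by
    intro t ht
    rw [hode t (Set.Ioi_subset_Ici_self ht), hy t (Set.Ioi_subset_Ici_self ht)]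
    linarith [storage_deriv_add_supply_nonpos hLMI (x t) (u t)]
  have hbound :=
    sub_le_integral_Ioi_of_hasDerivAt_of_le (φ := fun t => -qf Pi (Sum.elim (y t) (u t)))
      (fun t ht => hasDerivAt_qf P (hx t ht)) hPerfInt.neg hdiss hlim
  rw [hx0, qf_zero, integral_neg] at hbound
  linarith

/-- Sufficiency direction of the KYP lemma in the time domain (Lemma 1, (1) ⟹ (2)). -/
theorem KYP_sufficiency_time_domain
    {n p q : ℕ}
    (A : Matrix (Fin n) (Fin n) ℂ) (B : Matrix (Fin n) (Fin p) ℂ)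
    (C : Matrix (Fin q) (Fin n) ℂ) (D : Matrix (Fin q) (Fin p) ℂ)
    (P : Matrix (Fin n) (Fin n) ℂ) (hP : P.IsHermitian)
    (Pi : Matrix (Fin q ⊕ Fin p) (Fin q ⊕ Fin p) ℂ) (hPi : Pi.IsHermitian)
    -- the KYP linear matrix inequality
    (hLMI : Matrix.PosSemidef
      (-((Matrix.fromBlocks A B (1 : Matrix (Fin n) (Fin n) ℂ) 0)ᴴ * kron2 !![0,1;1,0] P *
            Matrix.fromBlocks A B (1 : Matrix (Fin n) (Fin n) ℂ) 0 +
          (Matrix.fromBlocks C D 0 (1 : Matrix (Fin p) (Fin p) ℂ))ᴴ * Pi * Matrix.fromBlocks C D 0 (1 : Matrix (Fin p) (Fin p) ℂ))))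
    (x : ℝ → Fin n → ℂ) (x' : ℝ → Fin n → ℂ)
    (hx : ∀ t ∈ Set.Ici (0:ℝ), HasDerivAt x (x' t) t)
    (hx'c : ContinuousOn x' (Set.Ici 0))
    (hx0 : x 0 = 0)
    (u : ℝ → Fin p → ℂ) (hu : ContinuousOn u (Set.Ici 0))
    (hode : ∀ t ∈ Set.Ici (0:ℝ), x' t = A.mulVec (x t) + B.mulVec (u t))
    (y : ℝ → Fin q → ℂ)
    (hy : ∀ t ∈ Set.Ici (0:ℝ), y t = C.mulVec (x t) + D.mulVec (u t))
    (hPerfInt : IntegrableOn (fun t => qf Pi (Sum.elim (y t) (u t))) (Set.Ioi 0))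
    (hlim : ∃ L : ℝ, 0 ≤ L ∧
      Filter.Tendsto (fun T => qf P (x T)) Filter.atTop (nhds L)) :
    ∫ t in Set.Ioi (0:ℝ), qf Pi (Sum.elim (y t) (u t)) ≤ 0 :=
  KYP_sufficiency_time_domain_general A B C D P Pi hLMI x x' hx hx0 u hode y hy hPerfInt hlim
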